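/- arXiv:2110.14489 — 3 statements merged into one kernel-verified Lean document; each statement's English description precedes it below -/
import Mathlib

section
/- Let e be a real number with 0 ≤ e < 1, set η = √(1 − e²), let k be a natural number and ν a real number. Then (1/(2π)) · ∫₀^{2π} cos(k·f + ν) · η³/(1 + e·cos f)² df = (−e)^k · (1 + k·η)/(1 + η)^k · cos ν. -/
/-!
Write `I k = ∫₀^{2π} cos (k f) / (1 + e cos f)²` and `J k = ∫₀^{2π} cos (k f) / (1 + e cos f)`
(`kozaiIntegral e 2 k` and `kozaiIntegral e 1 k`). Differentiating `sin ((k + 1) f) / (1 + e cos f)`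
gives the first-order recurrence `I (k + 1) + e I k + k J (k + 1) = 0`, and `J 0 = I 0 + e I 1`.
Since `2 cos f cos ((k + 1) f) = cos ((k + 2) f) + cos (k f)`, the `J k` satisfy
`e J (k + 2) + 2 J (k + 1) + e J k = 0`, whose characteristic roots are `-β` and `-1/β` with
`β = e / (1 + η)`; together with `J 0 = 2π / η` and `e J 1 = 2π - J 0` this gives
`J k = (2π / η) (-β) ^ k`, and the recurrence for `I` then yields
`I k = 2π (-e) ^ k (1 + k η) / (η³ (1 + η) ^ k)` by induction. The sine part of `cos (k f + ν)`
integrates to zero by the symmetry `f ↦ 2π - f`.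
-/

open Real intervalIntegral
open MeasureTheory (volume)

noncomputable def kozaiIntegral (e : ℝ) (p k : ℕ) : ℝ :=
  ∫ f in (0 : ℝ)..2 * π, cos (k * f) / (1 + e * cos f) ^ p

lemma integral_eq_zero_of_reflect {g : ℝ → ℝ} {a b : ℝ} (hg : ∀ x, g (a + b - x) = -g x) :
    ∫ x in a..b, g x = 0 := by
  have h := integral_comp_sub_left g (a + b) (a := a) (b := b)
  simp only [hg, integral_neg, add_sub_cancel_right, add_sub_cancel_left] at h
  linarith

lemma sin_nat_mul_two_pi (n : ℕ) : sin (n * (2 * π)) = 0 := by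
  simpa using sin_periodic.nat_mul_eq n

lemma integral_cos_nat_mul_eq_zero {k : ℕ} (hk : k ≠ 0) :
    ∫ x in (0 : ℝ)..2 * π, cos (k * x) = 0 := by
  rw [integral_comp_mul_left (fun x => cos x) (Nat.cast_ne_zero.mpr hk), integral_cos,
    sin_nat_mul_two_pi]
  simp

section

variable {e : ℝ}

lemma one_add_mul_cos_pos (he : |e| < 1) (x : ℝ) : 0 < 1 + e * cos x := by
  have : |e * cos x| < 1 := by
    rw [abs_mul]
    exact lt_of_le_of_lt (mul_le_of_le_one_right (abs_nonneg e) (abs_cos_le_one x)) he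
  linarith [neg_abs_le (e * cos x)]

lemma intervalIntegrable_div_one_add_mul_cos_pow (he : |e| < 1) {g : ℝ → ℝ} (hg : Continuous g)
    (p : ℕ) (a b : ℝ) : IntervalIntegrable (fun x => g x / (1 + e * cos x) ^ p) volume a b :=
  (hg.div (by fun_prop) fun x => pow_ne_zero p (one_add_mul_cos_pos he x).ne').intervalIntegrable
    _ _

lemma intervalIntegrable_cos_nat_mul_div_pow (he : |e| < 1) (p k : ℕ) :
    IntervalIntegrable (fun f => cos (k * f) / (1 + e * cos f) ^ p) volume 0 (2 * π) :=
  intervalIntegrable_div_one_add_mul_cos_pow he (by fun_prop) p _ _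

lemma hasDerivAt_sin_mul_div_one_add_mul_cos (he : |e| < 1) (a x : ℝ) :
    HasDerivAt (fun x => sin ((a + 1) * x) / (1 + e * cos x))
      (cos ((a + 1) * x) / (1 + e * cos x) ^ 2 + e * (cos (a * x) / (1 + e * cos x) ^ 2)
        + a * (cos ((a + 1) * x) / (1 + e * cos x) ^ 1)) x := by
  have hu := (one_add_mul_cos_pos he x).ne'
  have hnum : HasDerivAt (fun x => sin ((a + 1) * x)) (cos ((a + 1) * x) * (a + 1)) x :=
    ((hasDerivAt_id x).const_mul (a + 1)).sin.congr_deriv (by simp)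
  have hden : HasDerivAt (fun x => 1 + e * cos x) (e * -sin x) x :=
    ((hasDerivAt_cos x).const_mul e).const_add 1
  refine (hnum.div hden hu).congr_deriv ?_
  have hsin : e * sin x * sin ((a + 1) * x) = e * cos (a * x) - e * cos x * cos ((a + 1) * x) := by
    rw [show a * x = (a + 1) * x - x by ring, cos_sub]; ring
  field_simp
  linear_combination hsin

lemma kozaiIntegral_two_succ (he : |e| < 1) (k : ℕ) :
    kozaiIntegral e 2 (k + 1) + e * kozaiIntegral e 2 k + k * kozaiIntegral e 1 (k + 1) = 0 := by
  have h₁ := intervalIntegrable_cos_nat_mul_div_pow he 2 (k + 1)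
  have h₂ := (intervalIntegrable_cos_nat_mul_div_pow he 2 k).const_mul e
  have h₃ := (intervalIntegrable_cos_nat_mul_div_pow he 1 (k + 1)).const_mul (k : ℝ)
  push_cast at h₁ h₃
  have hFTC := integral_eq_sub_of_hasDerivAt
    (fun x _ => hasDerivAt_sin_mul_div_one_add_mul_cos he k x) ((h₁.add h₂).add h₃)
  have hsin : sin ((k + 1) * (2 * π)) = 0 := by exact_mod_cast sin_nat_mul_two_pi (k + 1)
  rw [integral_add (h₁.add h₂) h₃, integral_add h₁ h₂, integral_const_mul,
    integral_const_mul, hsin] at hFTC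
  simpa [kozaiIntegral] using hFTC

lemma kozaiIntegral_one_zero_eq_two_add (he : |e| < 1) :
    kozaiIntegral e 1 0 = kozaiIntegral e 2 0 + e * kozaiIntegral e 2 1 := by
  have h₁ := intervalIntegrable_cos_nat_mul_div_pow he 2 0
  have h₂ := (intervalIntegrable_cos_nat_mul_div_pow he 2 1).const_mul e
  simp only [kozaiIntegral]
  rw [← integral_const_mul, ← integral_add h₁ h₂]
  refine integral_congr fun x _ => ?_
  have hu := (one_add_mul_cos_pos he x).ne'
  field_simp
  simp

lemma mul_kozaiIntegral_one_one (he : |e| < 1) :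
    e * kozaiIntegral e 1 1 = 2 * π - kozaiIntegral e 1 0 := by
  have h₁ := intervalIntegrable_cos_nat_mul_div_pow he 1 0
  calc e * kozaiIntegral e 1 1
      = ∫ x in (0 : ℝ)..2 * π, (1 - cos ((0 : ℕ) * x) / (1 + e * cos x) ^ 1) := by
        rw [kozaiIntegral, ← integral_const_mul]
        refine integral_congr fun x _ => ?_
        have hu := (one_add_mul_cos_pos he x).ne'
        field_simp
        simp
    _ = 2 * π - kozaiIntegral e 1 0 := by
        rw [integral_sub intervalIntegrable_const h₁, kozaiIntegral]
        simp

lemma kozaiIntegral_one_add_two (he : |e| < 1) (k : ℕ) :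
    e * kozaiIntegral e 1 (k + 2) + 2 * kozaiIntegral e 1 (k + 1) + e * kozaiIntegral e 1 k
      = 0 := by
  have h₁ := (intervalIntegrable_cos_nat_mul_div_pow he 1 (k + 2)).const_mul e
  have h₂ := (intervalIntegrable_cos_nat_mul_div_pow he 1 (k + 1)).const_mul 2
  have h₃ := (intervalIntegrable_cos_nat_mul_div_pow he 1 k).const_mul e
  calc _ = ∫ x in (0 : ℝ)..2 * π, 2 * cos (((k + 1 : ℕ) : ℝ) * x) := by
        rw [kozaiIntegral, kozaiIntegral, kozaiIntegral, ← integral_const_mul, ← integral_const_mul,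
          ← integral_const_mul, ← integral_add h₁ h₂, ← integral_add (h₁.add h₂) h₃]
        refine integral_congr fun x _ => ?_
        have hu := (one_add_mul_cos_pos he x).ne'
        have h := cos_add_cos ((k + 2) * x) (k * x)
        rw [show ((k + 2) * x + k * x) / 2 = (k + 1) * x by ring,
          show ((k + 2) * x - k * x) / 2 = x by ring] at h
        push_cast
        field_simp
        ring_nf at h ⊢
        linear_combination e * h
    _ = 0 := by rw [integral_const_mul, integral_cos_nat_mul_eq_zero k.succ_ne_zero, mul_zero]

/-- The antiderivative is `f - 2 arg (1 + β e^{if})`; unlike the textbook one through `tan (f / 2)`,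
it is continuous on all of `ℝ`. -/
lemma hasDerivAt_sub_two_arctan {β : ℝ} (hβ : |β| < 1) (x : ℝ) :
    HasDerivAt (fun x => x - 2 * arctan (β * sin x / (1 + β * cos x)))
      ((1 - β ^ 2) / (1 + β ^ 2 + 2 * β * cos x)) x := by
  have hu := one_add_mul_cos_pos hβ x
  have hq : HasDerivAt (fun x => β * sin x / (1 + β * cos x))
      ((β * cos x * (1 + β * cos x) - β * sin x * (β * -sin x)) / (1 + β * cos x) ^ 2) x :=
    ((hasDerivAt_sin x).const_mul β).div (((hasDerivAt_cos x).const_mul β).const_add 1) hu.ne'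
  refine ((hasDerivAt_id x).sub (hq.arctan.const_mul 2)).congr_deriv ?_
  have hv : 1 + β ^ 2 + 2 * β * cos x ≠ 0 := by nlinarith [sin_sq_add_cos_sq x]
  field_simp
  linear_combination -2 * β ^ 2 * (1 + β * cos x) * sin_sq_add_cos_sq x

lemma abs_lt_one_of_sq_eq_one_sub_sq {η : ℝ} (hη0 : 0 < η) (hη : η ^ 2 = 1 - e ^ 2) : |e| < 1 :=
  (sq_lt_one_iff_abs_lt_one e).mp (by nlinarith)

lemma div_one_add_sq_mul {η : ℝ} (hη0 : 0 < η) (hη : η ^ 2 = 1 - e ^ 2) :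
    (e / (1 + η)) ^ 2 * (1 + η) = 1 - η := by
  field_simp
  linear_combination hη

lemma kozaiIntegral_one_zero_eq_two_pi_div {η : ℝ} (hη0 : 0 < η) (hη : η ^ 2 = 1 - e ^ 2) :
    kozaiIntegral e 1 0 = 2 * π / η := by
  have he := abs_lt_one_of_sq_eq_one_sub_sq hη0 hη
  have hβ_sq := div_one_add_sq_mul hη0 hη
  set β := e / (1 + η)
  have hβe : β * (1 + η) = e := div_mul_cancel₀ e (by positivity)
  have hβ : |β| < 1 := by
    rw [abs_div, abs_of_pos (by positivity : 0 < 1 + η), div_lt_one (by positivity)]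
    linarith
  have hderiv : ∀ x ∈ Set.uIcc 0 (2 * π), HasDerivAt
      (fun x => η⁻¹ * (x - 2 * arctan (β * sin x / (1 + β * cos x))))
      (cos ((0 : ℕ) * x) / (1 + e * cos x) ^ 1) x := fun x _ => by
    refine ((hasDerivAt_sub_two_arctan hβ x).const_mul η⁻¹).congr_deriv ?_
    have hu := (one_add_mul_cos_pos he x).ne'
    have hnum : 1 - β ^ 2 = 2 * η / (1 + η) := by
      rw [eq_div_iff (by positivity)]
      linear_combination -hβ_sq
    have hden : 1 + β ^ 2 + 2 * β * cos x = 2 * (1 + e * cos x) / (1 + η) := by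
      rw [eq_div_iff (by positivity)]
      linear_combination hβ_sq + 2 * cos x * hβe
    rw [hnum, hden]
    field_simp
    simp
  rw [kozaiIntegral,
    integral_eq_sub_of_hasDerivAt hderiv (intervalIntegrable_cos_nat_mul_div_pow he 1 0)]
  simp [div_eq_inv_mul]

lemma kozaiIntegral_one_eq {η : ℝ} (hη0 : 0 < η) (hη : η ^ 2 = 1 - e ^ 2) (k : ℕ) :
    kozaiIntegral e 1 k = 2 * π / η * (-(e / (1 + η))) ^ k := by
  have he := abs_lt_one_of_sq_eq_one_sub_sq hη0 hη
  have hJ0 := kozaiIntegral_one_zero_eq_two_pi_div hη0 hη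
  -- For `e = 0` the recurrence reads `2 J (k + 1) = 0`; otherwise it is solved for `J (k + 2)`.
  rcases eq_or_ne e 0 with rfl | he0
  · cases k with
    | zero => simpa using hJ0
    | succ k => simpa using kozaiIntegral_one_add_two he k
  have hβ_sq := div_one_add_sq_mul hη0 hη
  have hβe : e / (1 + η) * (1 + η) = e := div_mul_cancel₀ e (by positivity)
  generalize e / (1 + η) = β at hβ_sq hβe ⊢
  have hβ : e * (1 + β ^ 2) = 2 * β := by linear_combination -(1 + β ^ 2) * hβe + β * hβ_sq
  induction k using Nat.twoStepInduction with
  | zero => simpa using hJ0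
  | one =>
    refine mul_left_cancel₀ he0 ?_
    rw [mul_kozaiIntegral_one_one he, hJ0]
    field_simp
    linear_combination hβ_sq - β * hβe
  | more k ih₀ ih₁ =>
    have hrec := kozaiIntegral_one_add_two he k
    rw [ih₀, ih₁] at hrec
    refine mul_left_cancel₀ he0 ?_
    linear_combination hrec - 2 * π / η * (-β) ^ k * hβ

lemma kozaiIntegral_two_eq {η : ℝ} (hη0 : 0 < η) (hη : η ^ 2 = 1 - e ^ 2) (k : ℕ) :
    kozaiIntegral e 2 k = 2 * π * (-e) ^ k * (1 + k * η) / (η ^ 3 * (1 + η) ^ k) := by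
  have he := abs_lt_one_of_sq_eq_one_sub_sq hη0 hη
  have hη0' := hη0.ne'
  induction k with
  | zero =>
    have hJ0 := kozaiIntegral_one_zero_eq_two_add he
    have hI1 := kozaiIntegral_two_succ he 0
    rw [kozaiIntegral_one_zero_eq_two_pi_div hη0 hη] at hJ0
    simp only [Nat.cast_zero, zero_mul, add_zero, zero_add] at hI1 ⊢
    field_simp at hJ0 ⊢
    linear_combination -hJ0 + η * kozaiIntegral e 2 0 * hη - η * e * hI1
  | succ k ih =>
    have hrec := kozaiIntegral_two_succ he k
    rw [ih, kozaiIntegral_one_eq hη0 hη, neg_div', div_pow] at hrec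
    have hP : (1 + η) ^ k ≠ 0 := pow_ne_zero k (by positivity)
    push_cast
    field_simp at hrec ⊢
    refine mul_left_cancel₀ hP ?_
    linear_combination hrec

lemma integral_sin_nat_mul_div_eq_zero (k : ℕ) :
    ∫ x in (0 : ℝ)..2 * π, sin (k * x) / (1 + e * cos x) ^ 2 = 0 := by
  refine integral_eq_zero_of_reflect fun x => ?_
  rw [zero_add, mul_sub, sin_nat_mul_two_pi_sub, cos_two_pi_sub, neg_div]

end

/-- Kozai's closed-form average over the true anomaly:
`(1/(2π)) ∫₀^{2π} cos(k·f + ν) · η³/(1 + e·cos f)² df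
  = (−e)^k · (1 + k·η)/(1 + η)^k · cos ν`. -/
theorem average_cos_true_anomaly (e : ℝ) (he0 : 0 ≤ e) (he1 : e < 1)
    (η : ℝ) (hη : η = Real.sqrt (1 - e ^ 2)) (k : ℕ) (ν : ℝ) :
    (1 / (2 * Real.pi)) *
      ∫ f in (0:ℝ)..(2 * Real.pi),
        Real.cos ((k : ℝ) * f + ν) * (η ^ 3 / (1 + e * Real.cos f) ^ 2)
    = (-e) ^ k * (1 + (k : ℝ) * η) / (1 + η) ^ k * Real.cos ν := by
  have he : |e| < 1 := abs_lt.mpr ⟨by linarith, he1⟩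
  have hη0 : 0 < η := hη ▸ sqrt_pos.mpr (by nlinarith)
  have hη2 : η ^ 2 = 1 - e ^ 2 := hη ▸ sq_sqrt (by nlinarith)
  have hcos := (intervalIntegrable_cos_nat_mul_div_pow he 2 k).const_mul (cos ν * η ^ 3)
  have hsin := (intervalIntegrable_div_one_add_mul_cos_pow he
    (by fun_prop : Continuous fun x => sin (k * x)) 2 0 (2 * π)).const_mul (sin ν * η ^ 3)
  have hsplit : ∀ f, cos (k * f + ν) * (η ^ 3 / (1 + e * cos f) ^ 2) =
      cos ν * η ^ 3 * (cos (k * f) / (1 + e * cos f) ^ 2)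
        - sin ν * η ^ 3 * (sin (k * f) / (1 + e * cos f) ^ 2) := fun f => by
    rw [cos_add]; ring
  simp_rw [hsplit]
  rw [integral_sub hcos hsin, integral_const_mul, integral_const_mul,
    integral_sin_nat_mul_div_eq_zero, ← kozaiIntegral, kozaiIntegral_two_eq hη0 hη2]
  field_simp
  ring
end

section
/- Let e be real with 0 ≤ e < 1 and set η = √(1 − e²). Let u : ℝ → ℝ satisfy u(M) − e·sin(u(M)) = M for all M, and let f : ℝ → ℝ satisfy, for all M, cos(f(M)) = (cos(u(M)) − e)/(1 − e·cos(u(M))) and sin(f(M)) = η·sin(u(M))/(1 − e·cos(u(M))). If u and f are differentiable at a point M₀, then f'(M₀) = (1 + e·cos(f(M₀)))²/η³. -/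
/-!
Writing `D = 1 - e cos u`, the relations for `cos f` and `sin f` are differentiable functions
of `u`, and for any angle `θ` whose sine and cosine are differentiable, `θ' = cos θ (sin θ)' -
sin θ (cos θ)'`. This gives `df/du = η / D`, while Kepler's equation gives `du/dM = 1 / D`, so
`f' = η / D²`. Finally `1 + e cos f = η² / D`, whence `(1 + e cos f)² / η³ = η / D²`.
-/

open Real

theorem HasDerivAt.eq_cos_mul_sub_sin_mul {θ s c : ℝ → ℝ} {x θ' s' c' : ℝ}
    (hθ : HasDerivAt θ θ' x) (hs : HasDerivAt s s' x) (hc : HasDerivAt c c' x)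
    (hsin : ∀ t, Real.sin (θ t) = s t) (hcos : ∀ t, Real.cos (θ t) = c t) :
    θ' = c x * s' - s x * c' := by
  have hsθ := (Real.hasDerivAt_sin (θ x)).comp x hθ
  have hcθ := (Real.hasDerivAt_cos (θ x)).comp x hθ
  rw [show Real.sin ∘ θ = s from funext hsin] at hsθ
  rw [show Real.cos ∘ θ = c from funext hcos] at hcθ
  rw [hs.unique hsθ, hc.unique hcθ, ← hsin, ← hcos]
  linear_combination -θ' * sin_sq_add_cos_sq (θ x)

theorem one_sub_mul_cos_pos {e : ℝ} (he0 : 0 ≤ e) (he1 : e < 1) (x : ℝ) :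
    0 < 1 - e * cos x := by
  linarith [mul_le_of_le_one_right he0 (cos_le_one x)]

theorem hasDerivAt_cos_sub_div_one_sub_mul_cos {e x : ℝ} (hD : 1 - e * cos x ≠ 0) :
    HasDerivAt (fun y => (cos y - e) / (1 - e * cos y))
      (-(1 - e ^ 2) * sin x / (1 - e * cos x) ^ 2) x :=
  (((hasDerivAt_cos x).sub_const e).div
    (((hasDerivAt_cos x).const_mul e).const_sub 1) hD).congr_deriv (by ring)

theorem hasDerivAt_mul_sin_div_one_sub_mul_cos {e η x : ℝ} (hD : 1 - e * cos x ≠ 0) :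
    HasDerivAt (fun y => η * sin y / (1 - e * cos y))
      (η * (cos x - e) / (1 - e * cos x) ^ 2) x :=
  (((hasDerivAt_sin x).const_mul η).div
    (((hasDerivAt_cos x).const_mul e).const_sub 1) hD).congr_deriv
    (by linear_combination -η * e * sin_sq_add_cos_sq x / (1 - e * cos x) ^ 2)

theorem true_anomaly_rate_wrt_eccentric_anomaly {e η x : ℝ} (hD : 1 - e * cos x ≠ 0) :
    (cos x - e) / (1 - e * cos x) * (η * (cos x - e) / (1 - e * cos x) ^ 2)
      - η * sin x / (1 - e * cos x) * (-(1 - e ^ 2) * sin x / (1 - e * cos x) ^ 2)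
      = η / (1 - e * cos x) := by
  have hnum : (cos x - e) ^ 2 + (1 - e ^ 2) * sin x ^ 2 = (1 - e * cos x) ^ 2 := by
    linear_combination (1 - e ^ 2) * sin_sq_add_cos_sq x
  generalize 1 - e * cos x = D at hD hnum ⊢
  field_simp
  linear_combination η * hnum

theorem HasDerivAt.mul_one_sub_mul_cos_eq_one_of_kepler {e u' M : ℝ} {u : ℝ → ℝ}
    (hu : ∀ M, u M - e * Real.sin (u M) = M) (hU : HasDerivAt u u' M) :
    u' * (1 - e * Real.cos (u M)) = 1 := by
  have hK : HasDerivAt (fun M => u M - e * Real.sin (u M)) (u' - e * (Real.cos (u M) * u')) M :=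
    hU.sub (((Real.hasDerivAt_sin (u M)).comp M hU).const_mul e)
  simp only [hu] at hK
  linear_combination -(hasDerivAt_id' M).unique hK

/-- Derivative of the true anomaly with respect to the mean anomaly: with
`u(M) − e·sin (u M) = M` (Kepler's equation) and the standard relations between the
true anomaly `f` and the eccentric anomaly `u`, if `u` and `f` are differentiable at
`M₀` then `f'(M₀) = (1 + e·cos (f M₀))²/η³`. -/
theorem true_anomaly_deriv_wrt_mean_anomaly (e : ℝ) (he0 : 0 ≤ e) (he1 : e < 1)
    (η : ℝ) (hη : η = Real.sqrt (1 - e ^ 2)) (u f : ℝ → ℝ)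
    (hu : ∀ M : ℝ, u M - e * Real.sin (u M) = M)
    (hcos : ∀ M : ℝ, Real.cos (f M) = (Real.cos (u M) - e) / (1 - e * Real.cos (u M)))
    (hsin : ∀ M : ℝ, Real.sin (f M) = η * Real.sin (u M) / (1 - e * Real.cos (u M)))
    (M₀ : ℝ) (hdu : DifferentiableAt ℝ u M₀) (hdf : DifferentiableAt ℝ f M₀) :
    deriv f M₀ = (1 + e * Real.cos (f M₀)) ^ 2 / η ^ 3 := by
  have he2 : 0 < 1 - e ^ 2 := by nlinarith
  have hηpos : 0 < η := hη ▸ sqrt_pos.mpr he2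
  have hη2 : η ^ 2 = 1 - e ^ 2 := by rw [hη, sq_sqrt he2.le]
  have hD := one_sub_mul_cos_pos he0 he1 (u M₀)
  have hU := hdu.hasDerivAt
  have hkep := hU.mul_one_sub_mul_cos_eq_one_of_kepler hu
  have hf' := hdf.hasDerivAt.eq_cos_mul_sub_sin_mul
    ((hasDerivAt_mul_sin_div_one_sub_mul_cos hD.ne').comp M₀ hU)
    ((hasDerivAt_cos_sub_div_one_sub_mul_cos hD.ne').comp M₀ hU) hsin hcos
  simp only [Function.comp_apply] at hf'
  have hfu : deriv f M₀ = η / (1 - e * cos (u M₀)) * deriv u M₀ := by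
    rw [hf']
    linear_combination deriv u M₀ * true_anomaly_rate_wrt_eccentric_anomaly (η := η) hD.ne'
  have hu' : deriv u M₀ = 1 / (1 - e * cos (u M₀)) := eq_one_div_of_mul_eq_one_left hkep
  have hone : 1 + e * cos (f M₀) = η ^ 2 / (1 - e * cos (u M₀)) := by
    rw [hcos, hη2]; field_simp; ring
  rw [hfu, hu', hone]
  field_simp
end

section
/- Let a, e, u, ω, Ω, i, f_P be real numbers with 0 ≤ e ≤ 1, and set η = √(1 − e²), X = a·(cos u − e), Y = a·η·sin u. Then (X·cos ω − Y·sin ω)·cos(f_P − Ω) + cos i·(X·sin ω + Y·cos ω)·sin(f_P − Ω) = T₀ + T₁ + T₂, where T₀ = (a(η+1)/4)·(cos i + 1)·cos(−u + f_P − ω − Ω) − (a(η+1)/4)·(cos i − 1)·cos(u + f_P + ω − Ω), T₁ = −(a e/2)·(cos i + 1)·cos(−ω + f_P − Ω) + (a e/2)·(cos i − 1)·cos(ω + f_P − Ω), and T₂ = (a e²/(4(1+η)))·(cos i + 1)·cos(u + f_P − ω − Ω) − (a e²/(4(1+η)))·(cos i − 1)·cos(−u + f_P + ω − Ω). -/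
/-!
Writing `c = cos i` and `θ = f_P − Ω`, the inclined rotation splits as `(c + 1)/2` times a
rotation by `θ − ω` minus `(c − 1)/2` times a reflected rotation by `θ + ω`. On each part the
Keplerian ellipse `(a (cos u − e), a η sin u)` is the sum of two circles of radii `a (1 + η)/2`
and `a (1 − η)/2` turning in opposite directions, offset by `−a e`; finally
`a (1 − η)/4 = a e² / (4 (1 + η))` because `η² = 1 − e²`.
-/

open Real

theorem inclined_rotation_eq_prograde_sub_retrograde (X Y c ω θ : ℝ) :
    (X * cos ω - Y * sin ω) * cos θ + c * (X * sin ω + Y * cos ω) * sin θ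
      = (c + 1) / 2 * (X * cos (θ - ω) + Y * sin (θ - ω))
        - (c - 1) / 2 * (X * cos (θ + ω) - Y * sin (θ + ω)) := by
  rw [cos_sub, sin_sub, cos_add, sin_add]
  ring

theorem ellipse_projection_eq_epicycles (a e η u φ : ℝ) :
    a * (cos u - e) * cos φ + a * η * sin u * sin φ
      = a * (1 + η) / 2 * cos (φ - u) - a * e * cos φ + a * (1 - η) / 2 * cos (φ + u) := by
  rw [cos_sub, cos_add]
  ring

theorem sq_div_one_add_sqrt_one_sub_sq {e : ℝ} (he : e ^ 2 ≤ 1) :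
    e ^ 2 / (1 + √(1 - e ^ 2)) = 1 - √(1 - e ^ 2) := by
  have hpos : 0 < 1 + √(1 - e ^ 2) := by positivity
  rw [div_eq_iff hpos.ne']
  linear_combination sq_sqrt (sub_nonneg.mpr he)

/-- The identity `r·cos α = T₀ + T₁ + T₂` expressing the projection of the particle's
position on the direction of the planet as a finite trigonometric sum (key step in the
proof of the D'Alembert rules, Lemma 1). -/
theorem r_cos_alpha_trig_identity (a e u ω Ω i fP : ℝ)
    (he0 : 0 ≤ e) (he1 : e ≤ 1)
    (η X Y T₀ T₁ T₂ : ℝ)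
    (hη : η = Real.sqrt (1 - e ^ 2))
    (hX : X = a * (Real.cos u - e))
    (hY : Y = a * η * Real.sin u)
    (hT0 : T₀ = (a * (η + 1) / 4) * (Real.cos i + 1) * Real.cos (-u + fP - ω - Ω)
              - (a * (η + 1) / 4) * (Real.cos i - 1) * Real.cos (u + fP + ω - Ω))
    (hT1 : T₁ = -(a * e / 2) * (Real.cos i + 1) * Real.cos (-ω + fP - Ω)
              + (a * e / 2) * (Real.cos i - 1) * Real.cos (ω + fP - Ω))
    (hT2 : T₂ = (a * e ^ 2 / (4 * (1 + η))) * (Real.cos i + 1) * Real.cos (u + fP - ω - Ω)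
              - (a * e ^ 2 / (4 * (1 + η))) * (Real.cos i - 1) * Real.cos (-u + fP + ω - Ω)) :
    (X * Real.cos ω - Y * Real.sin ω) * Real.cos (fP - Ω)
      + Real.cos i * (X * Real.sin ω + Y * Real.cos ω) * Real.sin (fP - Ω)
    = T₀ + T₁ + T₂ := by
  have hcoeff : a * e ^ 2 / (4 * (1 + η)) = a * (1 - η) / 4 := by
    rw [mul_div_assoc, mul_comm 4, ← div_div, hη, sq_div_one_add_sqrt_one_sub_sq (by nlinarith)]
    ring
  have hprograde := ellipse_projection_eq_epicycles a e η u (fP - Ω - ω)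
  have hretrograde := ellipse_projection_eq_epicycles a e η (-u) (fP - Ω + ω)
  rw [cos_neg, sin_neg] at hretrograde
  rw [hT0, hT1, hT2, hcoeff, hX, hY, inclined_rotation_eq_prograde_sub_retrograde]
  linear_combination (norm := ring_nf)
    (cos i + 1) / 2 * hprograde - (cos i - 1) / 2 * hretrograde
end
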